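/- In the non-zero-sum malware detection game Γ, the three sets of Defender strategies coincide: the set of Defender Nash-equilibrium strategies {ρ : ∃ μ, (ρ,μ) is a mixed Nash equilibrium of Γ}, the set of Defender maximin strategies, and the set of Defender Strong Stackelberg Equilibrium strategies are all equal. -/

import Mathlib

/-!
Since `Ξ > 0` and `k(ρ)` does not depend on `μ`, the Attacker's best responses in `Γ` are exactly
the minimisers of `U_d(ρ, ·)`. Hence the Nash equilibria of `Γ` are those of the zero-sum game
`Γ₀`, and the payoff `sup_{BR(ρ)} U_d(ρ, ·)` a leader obtains in `Γ` is the security level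
`min_μ U_d(ρ, μ)`, so SSE strategies are maximin strategies. In `Γ₀`, `U_d` is affine in each
variable on compact simplices, so the Sion–von Neumann minimax theorem gives a saddle point
`(ρ₀, μ₀)`; any maximin `ρ` guarantees its value `U_d(ρ₀, μ₀)`, which makes `(ρ, μ₀)` a saddle
point as well, and conversely an equilibrium strategy attains the value.
-/

open Finset Set

/-- Expected security damage bilinear form `S(ρ,μ) = Σ_{j,l} ρ j · μ l · S j l`. -/
def Sbil {R M : ℕ} (S : Fin R → Fin M → ℝ) (ρ : Fin R → ℝ) (μ : Fin M → ℝ) : ℝ :=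
  ∑ j, ∑ l, ρ j * μ l * S j l

/-- Expected inspection cost `k(ρ) = Σ_j ρ j · C j`. -/
def kcost {R : ℕ} (C : Fin R → ℝ) (ρ : Fin R → ℝ) : ℝ :=
  ∑ j, ρ j * C j

/-- Defender expected utility `U_d(ρ,μ) = -S(ρ,μ) - k(ρ)` (same in `Γ₀` and `Γ`). -/
def Ud {R M : ℕ} (S : Fin R → Fin M → ℝ) (C : Fin R → ℝ) (ρ : Fin R → ℝ)
    (μ : Fin M → ℝ) : ℝ :=
  -Sbil S ρ μ - kcost C ρ

/-- Mixed Nash equilibrium of the zero-sum game `Γ₀`, where the Attacker's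
utility is `U_a^{Γ₀}(ρ,μ) = -U_d(ρ,μ)`. -/
def NEzero {R M : ℕ} (S : Fin R → Fin M → ℝ) (C : Fin R → ℝ) (ρs : Fin R → ℝ)
    (μs : Fin M → ℝ) : Prop :=
  ρs ∈ stdSimplex ℝ (Fin R) ∧ μs ∈ stdSimplex ℝ (Fin M) ∧
  (∀ ρ ∈ stdSimplex ℝ (Fin R), Ud S C ρs μs ≥ Ud S C ρ μs) ∧
  (∀ μ ∈ stdSimplex ℝ (Fin M), -Ud S C ρs μs ≥ -Ud S C ρs μ)

/-- Mixed Nash equilibrium of the non-zero-sum game `Γ`, where the Attacker's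
utility is `U_a^{Γ}(ρ,μ) = Ξ·S(ρ,μ)`. -/
def NEgame {R M : ℕ} (S : Fin R → Fin M → ℝ) (C : Fin R → ℝ) (Ξ : ℝ)
    (ρs : Fin R → ℝ) (μs : Fin M → ℝ) : Prop :=
  ρs ∈ stdSimplex ℝ (Fin R) ∧ μs ∈ stdSimplex ℝ (Fin M) ∧
  (∀ ρ ∈ stdSimplex ℝ (Fin R), Ud S C ρs μs ≥ Ud S C ρ μs) ∧
  (∀ μ ∈ stdSimplex ℝ (Fin M), Ξ * Sbil S ρs μs ≥ Ξ * Sbil S ρs μ)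

/-- Maximin strategy of the Defender. -/
def Maximin {R M : ℕ} (S : Fin R → Fin M → ℝ) (C : Fin R → ℝ)
    (ρd : Fin R → ℝ) : Prop :=
  ρd ∈ stdSimplex ℝ (Fin R) ∧
  ∀ ρ ∈ stdSimplex ℝ (Fin R),
    sInf ((Ud S C ρd) '' stdSimplex ℝ (Fin M)) ≥
      sInf ((Ud S C ρ) '' stdSimplex ℝ (Fin M))

/-- The Attacker's best-response set to `ρ` in the non-zero-sum game `Γ`. -/
def BRset {R M : ℕ} (S : Fin R → Fin M → ℝ) (Ξ : ℝ) (ρ : Fin R → ℝ) :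
    Set (Fin M → ℝ) :=
  {μ | μ ∈ stdSimplex ℝ (Fin M) ∧
    ∀ μ' ∈ stdSimplex ℝ (Fin M), Ξ * Sbil S ρ μ ≥ Ξ * Sbil S ρ μ'}

/-- Strong Stackelberg Equilibrium strategy of the Defender in `Γ`. -/
def SSEstrat {R M : ℕ} (S : Fin R → Fin M → ℝ) (C : Fin R → ℝ) (Ξ : ℝ)
    (ρs : Fin R → ℝ) : Prop :=
  ρs ∈ stdSimplex ℝ (Fin R) ∧
  ∀ ρ ∈ stdSimplex ℝ (Fin R),
    sSup ((Ud S C ρs) '' BRset S Ξ ρs) ≥ sSup ((Ud S C ρ) '' BRset S Ξ ρ)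

lemma convexOn_concaveOn_of_affine {E : Type*} [AddCommMonoid E] [Module ℝ E] {s : Set E}
    (hs : Convex ℝ s) {f : E → ℝ}
    (hf : ∀ x y : E, ∀ a b : ℝ, a + b = 1 → f (a • x + b • y) = a * f x + b * f y) :
    ConvexOn ℝ s f ∧ ConcaveOn ℝ s f :=
  ⟨⟨hs, fun x _ y _ a b _ _ hab => (hf x y a b hab).le⟩,
    ⟨hs, fun x _ y _ a b _ _ hab => (hf x y a b hab).ge⟩⟩

section Game

variable {R M : ℕ} (S : Fin R → Fin M → ℝ) (C : Fin R → ℝ)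

lemma Ud_smul_add_smul_left (ρ ρ' : Fin R → ℝ) (μ : Fin M → ℝ) (a b : ℝ) :
    Ud S C (a • ρ + b • ρ') μ = a * Ud S C ρ μ + b * Ud S C ρ' μ := by
  have hS : Sbil S (a • ρ + b • ρ') μ = a * Sbil S ρ μ + b * Sbil S ρ' μ := by
    simp only [Sbil, Pi.add_apply, Pi.smul_apply, smul_eq_mul, Finset.mul_sum,
      ← Finset.sum_add_distrib]
    exact Finset.sum_congr rfl fun _ _ => Finset.sum_congr rfl fun _ _ => by ring
  have hk : kcost C (a • ρ + b • ρ') = a * kcost C ρ + b * kcost C ρ' := by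
    simp only [kcost, Pi.add_apply, Pi.smul_apply, smul_eq_mul, Finset.mul_sum,
      ← Finset.sum_add_distrib]
    exact Finset.sum_congr rfl fun _ _ => by ring
  rw [Ud, Ud, Ud, hS, hk]
  ring

lemma Ud_smul_add_smul_right (ρ : Fin R → ℝ) (μ μ' : Fin M → ℝ) {a b : ℝ} (hab : a + b = 1) :
    Ud S C ρ (a • μ + b • μ') = a * Ud S C ρ μ + b * Ud S C ρ μ' := by
  have hS : Sbil S ρ (a • μ + b • μ') = a * Sbil S ρ μ + b * Sbil S ρ μ' := by
    simp only [Sbil, Pi.add_apply, Pi.smul_apply, smul_eq_mul, Finset.mul_sum,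
      ← Finset.sum_add_distrib]
    exact Finset.sum_congr rfl fun _ _ => Finset.sum_congr rfl fun _ _ => by ring
  rw [Ud, Ud, Ud, hS]
  linear_combination kcost C ρ * hab

lemma continuous_Ud_left (μ : Fin M → ℝ) : Continuous fun ρ => Ud S C ρ μ := by
  unfold Ud Sbil kcost; fun_prop

lemma continuous_Ud_right (ρ : Fin R → ℝ) : Continuous (Ud S C ρ) := by
  unfold Ud Sbil kcost; fun_prop

/- `IsSaddlePointOn` lets its first variable minimise, so the Attacker, who minimises `U_d`
in the zero-sum game, comes first. -/
lemma exists_isSaddlePointOn_Ud (hR : 0 < R) (hM : 0 < M) :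
    ∃ μ₀ ∈ stdSimplex ℝ (Fin M), ∃ ρ₀ ∈ stdSimplex ℝ (Fin R),
      IsSaddlePointOn (stdSimplex ℝ (Fin M)) (stdSimplex ℝ (Fin R))
        (fun μ ρ => Ud S C ρ μ) μ₀ ρ₀ :=
  Sion.exists_isSaddlePointOn
    ⟨_, single_mem_stdSimplex ℝ (⟨0, hM⟩ : Fin M)⟩ (convex_stdSimplex ℝ _)
    (isCompact_stdSimplex ℝ _)
    (fun ρ _ => (continuous_Ud_right S C ρ).lowerSemicontinuous.lowerSemicontinuousOn _)
    (fun ρ _ => (convexOn_concaveOn_of_affine (convex_stdSimplex ℝ _)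
      fun μ μ' _ _ hab => Ud_smul_add_smul_right S C ρ μ μ' hab).1.quasiconvexOn)
    (convex_stdSimplex ℝ _) ⟨_, single_mem_stdSimplex ℝ (⟨0, hR⟩ : Fin R)⟩
    (isCompact_stdSimplex ℝ _)
    (fun μ _ => (continuous_Ud_left S C μ).upperSemicontinuous.upperSemicontinuousOn _)
    (fun μ _ => (convexOn_concaveOn_of_affine (convex_stdSimplex ℝ _)
      fun ρ ρ' a b _ => Ud_smul_add_smul_left S C ρ ρ' μ a b).2.quasiconcaveOn)

noncomputable def securityLevel (ρ : Fin R → ℝ) : ℝ :=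
  sInf (Ud S C ρ '' stdSimplex ℝ (Fin M))

lemma securityLevel_le_Ud (ρ : Fin R → ℝ) {μ : Fin M → ℝ} (hμ : μ ∈ stdSimplex ℝ (Fin M)) :
    securityLevel S C ρ ≤ Ud S C ρ μ :=
  csInf_le (((isCompact_stdSimplex ℝ _).image (continuous_Ud_right S C ρ)).bddBelow)
    (mem_image_of_mem _ hμ)

lemma securityLevel_eq_of_isMinOn {ρ : Fin R → ℝ} {μ : Fin M → ℝ} (hμ : μ ∈ stdSimplex ℝ (Fin M))
    (hmin : IsMinOn (Ud S C ρ) (stdSimplex ℝ (Fin M)) μ) :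
    securityLevel S C ρ = Ud S C ρ μ :=
  IsLeast.csInf_eq ⟨mem_image_of_mem _ hμ, forall_mem_image.2 hmin⟩

lemma exists_isMinOn_Ud (hM : 0 < M) (ρ : Fin R → ℝ) :
    ∃ μ ∈ stdSimplex ℝ (Fin M), IsMinOn (Ud S C ρ) (stdSimplex ℝ (Fin M)) μ :=
  (isCompact_stdSimplex ℝ _).exists_isMinOn ⟨_, single_mem_stdSimplex ℝ (⟨0, hM⟩ : Fin M)⟩
    (continuous_Ud_right S C ρ).continuousOn

lemma securityLevel_eq_of_isSaddlePointOn {ρ : Fin R → ℝ} {μ : Fin M → ℝ}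
    (hρ : ρ ∈ stdSimplex ℝ (Fin R)) (hμ : μ ∈ stdSimplex ℝ (Fin M))
    (h : IsSaddlePointOn (stdSimplex ℝ (Fin M)) (stdSimplex ℝ (Fin R))
      (fun μ ρ => Ud S C ρ μ) μ ρ) :
    securityLevel S C ρ = Ud S C ρ μ :=
  securityLevel_eq_of_isMinOn S C hμ (isMinOn_iff.2 fun μ' hμ' => h μ' hμ' ρ hρ)

lemma NEzero_iff_isSaddlePointOn {ρ : Fin R → ℝ} {μ : Fin M → ℝ} :
    NEzero S C ρ μ ↔ ρ ∈ stdSimplex ℝ (Fin R) ∧ μ ∈ stdSimplex ℝ (Fin M) ∧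
      IsSaddlePointOn (stdSimplex ℝ (Fin M)) (stdSimplex ℝ (Fin R))
        (fun μ ρ => Ud S C ρ μ) μ ρ := by
  refine and_congr_right fun hρ => and_congr_right fun hμ => ⟨?_, ?_⟩
  · rintro ⟨hbest, hworst⟩ μ' hμ' ρ' hρ'
    exact (hbest ρ' hρ').trans (neg_le_neg_iff.1 (hworst μ' hμ'))
  · intro h
    exact ⟨fun ρ' hρ' => h μ hμ ρ' hρ', fun μ' hμ' => neg_le_neg (h μ' hμ' ρ hρ)⟩

lemma mul_Sbil_le_mul_Sbil_iff {Ξ : ℝ} (hΞ : 0 < Ξ) (ρ : Fin R → ℝ) (μ μ' : Fin M → ℝ) :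
    Ξ * Sbil S ρ μ' ≤ Ξ * Sbil S ρ μ ↔ Ud S C ρ μ ≤ Ud S C ρ μ' := by
  rw [mul_le_mul_iff_right₀ hΞ, Ud, Ud, sub_le_sub_iff_right, neg_le_neg_iff]

lemma mem_BRset_iff {Ξ : ℝ} (hΞ : 0 < Ξ) {ρ : Fin R → ℝ} {μ : Fin M → ℝ} :
    μ ∈ BRset S Ξ ρ ↔
      μ ∈ stdSimplex ℝ (Fin M) ∧ IsMinOn (Ud S C ρ) (stdSimplex ℝ (Fin M)) μ := by
  refine and_congr_right fun _ => ?_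
  rw [isMinOn_iff]
  exact forall₂_congr fun μ' _ => mul_Sbil_le_mul_Sbil_iff S C hΞ ρ μ μ'

lemma NEgame_iff_NEzero {Ξ : ℝ} (hΞ : 0 < Ξ) {ρ : Fin R → ℝ} {μ : Fin M → ℝ} :
    NEgame S C Ξ ρ μ ↔ NEzero S C ρ μ :=
  and_congr_right fun _ => and_congr_right fun _ => and_congr_right fun _ =>
    forall₂_congr fun μ' _ => (mul_Sbil_le_mul_Sbil_iff S C hΞ ρ μ μ').trans neg_le_neg_iff.symm

lemma sSup_Ud_BRset (hM : 0 < M) {Ξ : ℝ} (hΞ : 0 < Ξ) (ρ : Fin R → ℝ) :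
    sSup (Ud S C ρ '' BRset S Ξ ρ) = securityLevel S C ρ := by
  suffices Ud S C ρ '' BRset S Ξ ρ = {securityLevel S C ρ} by rw [this, csSup_singleton]
  obtain ⟨μ₀, hμ₀, hmin₀⟩ := exists_isMinOn_Ud S C hM ρ
  refine eq_singleton_iff_unique_mem.2 ⟨⟨μ₀, (mem_BRset_iff S C hΞ).2 ⟨hμ₀, hmin₀⟩, ?_⟩, ?_⟩
  · exact (securityLevel_eq_of_isMinOn S C hμ₀ hmin₀).symm
  · rintro _ ⟨μ, hμ, rfl⟩
    obtain ⟨hμΔ, hmin⟩ := (mem_BRset_iff S C hΞ).1 hμ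
    exact (securityLevel_eq_of_isMinOn S C hμΔ hmin).symm

lemma SSEstrat_iff_Maximin (hM : 0 < M) {Ξ : ℝ} (hΞ : 0 < Ξ) (ρ : Fin R → ℝ) :
    SSEstrat S C Ξ ρ ↔ Maximin S C ρ := by
  simp only [SSEstrat, Maximin, sSup_Ud_BRset S C hM hΞ]
  rfl

lemma exists_NEzero_iff_Maximin (hR : 0 < R) (hM : 0 < M) (ρ : Fin R → ℝ) :
    (∃ μ, NEzero S C ρ μ) ↔ Maximin S C ρ := by
  simp only [NEzero_iff_isSaddlePointOn]
  constructor
  · rintro ⟨μ, hρ, hμ, hsaddle⟩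
    refine ⟨hρ, fun ρ' hρ' => ?_⟩
    calc securityLevel S C ρ' ≤ Ud S C ρ' μ := securityLevel_le_Ud S C ρ' hμ
      _ ≤ Ud S C ρ μ := hsaddle μ hμ ρ' hρ'
      _ = securityLevel S C ρ := (securityLevel_eq_of_isSaddlePointOn S C hρ hμ hsaddle).symm
  · rintro ⟨hρ, hmaximin⟩
    obtain ⟨μ₀, hμ₀, ρ₀, hρ₀, hsaddle⟩ := exists_isSaddlePointOn_Ud S C hR hM
    have hvalue : Ud S C ρ₀ μ₀ ≤ securityLevel S C ρ :=
      (securityLevel_eq_of_isSaddlePointOn S C hρ₀ hμ₀ hsaddle).symm.trans_le (hmaximin ρ₀ hρ₀)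
    refine ⟨μ₀, hρ, hμ₀, fun μ hμ ρ' hρ' => ?_⟩
    calc Ud S C ρ' μ₀ ≤ Ud S C ρ₀ μ₀ := hsaddle μ₀ hμ₀ ρ' hρ'
      _ ≤ securityLevel S C ρ := hvalue
      _ ≤ Ud S C ρ μ := securityLevel_le_Ud S C ρ hμ

end Game

theorem stmt4_general {R M : ℕ} (hR : 0 < R) (hM : 0 < M)
    (S : Fin R → Fin M → ℝ)
    (C : Fin R → ℝ)
    (Ξ : ℝ) (hΞ : 0 < Ξ) :
    {ρ : Fin R → ℝ | ∃ μ, NEgame S C Ξ ρ μ} = {ρ | Maximin S C ρ} ∧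
    {ρ : Fin R → ℝ | Maximin S C ρ} = {ρ | SSEstrat S C Ξ ρ} := by
  constructor
  · ext ρ
    simp only [mem_ofPred_eq, NEgame_iff_NEzero S C hΞ]
    exact exists_NEzero_iff_Maximin S C hR hM ρ
  · ext ρ
    exact (SSEstrat_iff_Maximin S C hM hΞ ρ).symm

/-- in `Γ`, the set of Defender Nash-equilibrium strategies, the
set of Defender maximin strategies and the set of Defender Strong Stackelberg
Equilibrium strategies all coincide. -/
theorem stmt4 {R M : ℕ} (hR : 0 < R) (hM : 0 < M)
    (S : Fin R → Fin M → ℝ) (hS : ∀ j l, 0 ≤ S j l)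
    (C : Fin R → ℝ) (hC : ∀ j, 0 ≤ C j)
    (Ξ : ℝ) (hΞ : 0 < Ξ) :
    {ρ : Fin R → ℝ | ∃ μ, NEgame S C Ξ ρ μ} = {ρ | Maximin S C ρ} ∧
    {ρ : Fin R → ℝ | Maximin S C ρ} = {ρ | SSEstrat S C Ξ ρ} :=
  stmt4_general hR hM S C Ξ hΞ
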